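/- arXiv:2105.10753 — 5 statements merged into one kernel-verified Lean document; each statement's English description precedes it below -/
import Mathlib

section
/- Let A be a commutative ring (possibly without unit) that is a module over a binomial ring R, and suppose binom(a,n) ∈ A for every a ∈ A and n > 0 (computed in A ⊗ ℚ, with A torsion-free). Then R ⊕ A carries a natural commutative ring structure with unit 1 ∈ R, given by (r+a)(s+b) = rs + rb + sa + ab, and R ⊕ A is a binomial ring; moreover ζ_n(r + a) = ∑_{i+j=n} ζ_i(r)·ζ_j(a). -/
/-!
In a torsion-free commutative ring, `x` has all binomial coefficients as soon as `n!` divides the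
falling factorial `x(x-1)⋯(x-n+1)` for every `n`. By the Vandermonde identity for falling
factorials, the elements with this property are closed under addition. Images of elements of the
binomial ring `R` have it, and so, by hypothesis, do the elements of `A`; hence every `r + a` does,
and `R ⊕ A` is binomial. The formula for `ζ_n(r + a)` is then the Vandermonde identity for
`Ring.choose`, together with the fact that ring homomorphisms commute with `Ring.choose`.
-/

open Polynomial Finset

namespace Polynomial

theorem descPochhammer_smeval_eq_eval {S : Type*} [Ring S] (x : S) (n : ℕ) :
    (descPochhammer ℤ n).smeval x = (descPochhammer S n).eval x := by
  rw [← aeval_eq_smeval, aeval_def, ← eval_map, descPochhammer_map]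

theorem map_smeval_int {S T F : Type*} [Ring S] [Ring T] [FunLike F S T] [RingHomClass F S T]
    (f : F) (p : ℤ[X]) (x : S) : f (p.smeval x) = p.smeval (f x) := by
  rw [← aeval_eq_smeval, ← aeval_eq_smeval]
  exact (aeval_algHom_apply (RingHomClass.toRingHom f).toIntAlgHom x p).symm

end Polynomial

theorem factorial_dvd_descPochhammer_smeval_map {R S F : Type*} [Ring R] [BinomialRing R]
    [Ring S] [FunLike F R S] [RingHomClass F R S] (f : F) (r : R) (n : ℕ) :
    (n.factorial : S) ∣ (descPochhammer ℤ n).smeval (f r) :=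
  ⟨f (Ring.choose r n), by
    rw [← map_smeval_int, Ring.descPochhammer_eq_factorial_smul_choose, map_nsmul,
      nsmul_eq_mul]⟩

theorem factorial_dvd_descPochhammer_smeval_add {S : Type*} [CommRing S] {x y : S}
    (hx : ∀ n, (n.factorial : S) ∣ (descPochhammer ℤ n).smeval x)
    (hy : ∀ n, (n.factorial : S) ∣ (descPochhammer ℤ n).smeval y) (n : ℕ) :
    (n.factorial : S) ∣ (descPochhammer ℤ n).smeval (x + y) := by
  rw [Ring.descPochhammer_smeval_add n (Commute.all x y)]
  refine dvd_sum fun ij hij => ?_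
  rw [← Nat.choose_mul_factorial_mul_factorial (HasAntidiagonal.antidiagonal.fst_le hij),
    Nat.sub_eq_of_eq_add' (mem_antidiagonal.mp hij).symm, Nat.cast_mul, Nat.cast_mul, mul_assoc]
  exact mul_dvd_mul_left _ (mul_dvd_mul (hx _) (hy _))

/-- `multichoose x n` is `choose (x + n - 1) n`, i.e. the quotient of the falling factorial at
`x + n - 1` by `n!`. -/
noncomputable abbrev BinomialRing.ofFactorialDvdDescPochhammer {S : Type*} [CommRing S]
    [IsAddTorsionFree S] (h : ∀ (x : S) n, (n.factorial : S) ∣ (descPochhammer ℤ n).smeval x) :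
    BinomialRing S where
  multichoose x n := (h (x + n - 1) n).choose
  factorial_nsmul_multichoose x n := by
    rw [nsmul_eq_mul, ← (h (x + n - 1) n).choose_spec, descPochhammer_smeval_eq_ascPochhammer]
    ring_nf

theorem Unitization.isAddTorsionFree {R A : Type*} [AddCommMonoid R] [AddCommMonoid A]
    [IsAddTorsionFree R] [IsAddTorsionFree A] : IsAddTorsionFree (Unitization R A) where
  nsmul_right_injective _ hn _ _ h :=
    Unitization.ext (nsmul_right_injective hn (congrArg (·.fst) h))
      (nsmul_right_injective hn (congrArg (·.snd) h))

theorem Unitization.inl_add_inr_mul_inl_add_inr {R A : Type*} [Semiring R]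
    [NonUnitalSemiring A] [Module R A] (r s : R) (a b : A) :
    (Unitization.inl r + Unitization.inr a) * (Unitization.inl s + Unitization.inr b)
      = (Unitization.inl (r * s) : Unitization R A)
        + Unitization.inr (r • b + s • a + a * b) := by
  ext <;> simp

theorem Unitization.factorial_dvd_descPochhammer_smeval {R A : Type*} [CommRing R]
    [BinomialRing R] [NonUnitalCommRing A] [Module R A] [IsScalarTower R A A]
    [SMulCommClass R A A]
    (h : ∀ (a : A) (n : ℕ),
      (n.factorial : Unitization R A) ∣ (descPochhammer ℤ n).smeval (inr a : Unitization R A))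
    (x : Unitization R A) (n : ℕ) :
    (n.factorial : Unitization R A) ∣ (descPochhammer ℤ n).smeval x := by
  rw [← x.inl_fst_add_inr_snd_eq]
  exact factorial_dvd_descPochhammer_smeval_add
    (factorial_dvd_descPochhammer_smeval_map (inlRingHom R A) x.fst) (h x.snd) n

/-- Let `A` be a commutative ring (possibly without unit, and torsion-free) that is
a module over a binomial ring `R`, and suppose that for every `a ∈ A` and `n > 0`
the falling factorial `a(a−1)⋯(a−n+1)` (computed in the unitization `R ⊕ A`) is
`n!` times an element of `A` (i.e. `binom(a,n) ∈ A`).  Then `R ⊕ A` carries a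
natural commutative ring structure with unit `1 ∈ R`, given by
`(r+a)(s+b) = rs + rb + sa + ab`, and `R ⊕ A` is a binomial ring; moreover
`ζ_n(r + a) = ∑_{i+j=n} ζ_i(r)·ζ_j(a)`. -/
theorem stmt_4 (R A : Type*) [CommRing R] [BinomialRing R]
    [NonUnitalCommRing A] [Module R A] [IsScalarTower R A A] [SMulCommClass R A A]
    [NoZeroSMulDivisors ℤ A]
    (hbin : ∀ (a : A) (n : ℕ), 0 < n → ∃ b : A,
      n.factorial • (Unitization.inr b : Unitization R A)
        = (descPochhammer (Unitization R A) n).eval (Unitization.inr a)) :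
    ∃ inst : BinomialRing (Unitization R A),
      (∀ (r s : R) (a b : A),
        (Unitization.inl r + Unitization.inr a) *
            (Unitization.inl s + Unitization.inr b)
          = (Unitization.inl (r * s) : Unitization R A)
            + Unitization.inr (r • b + s • a + a * b)) ∧
      (∀ (r : R) (a : A) (n : ℕ),
        letI := inst
        Ring.choose (Unitization.inl r + Unitization.inr a : Unitization R A) n
          = ∑ k ∈ Finset.range (n + 1),
              Unitization.inl (Ring.choose r k) *
                Ring.choose (Unitization.inr a : Unitization R A) (n - k)) := by
  have hinr (a : A) (n : ℕ) : (n.factorial : Unitization R A) ∣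
      (descPochhammer ℤ n).smeval (Unitization.inr a : Unitization R A) := by
    obtain rfl | hn := n.eq_zero_or_pos
    · simp
    obtain ⟨b, hb⟩ := hbin a n hn
    exact ⟨.inr b, by rw [descPochhammer_smeval_eq_eval, ← hb, nsmul_eq_mul]⟩
  have : IsAddTorsionFree R := BinomialRing.toIsAddTorsionFree
  have : IsAddTorsionFree A := Module.isTorsionFree_int_iff_isAddTorsionFree.mp inferInstance
  have : IsAddTorsionFree (Unitization R A) := Unitization.isAddTorsionFree
  let inst := BinomialRing.ofFactorialDvdDescPochhammer
    (Unitization.factorial_dvd_descPochhammer_smeval hinr)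
  refine ⟨inst, Unitization.inl_add_inr_mul_inl_add_inr, fun r a n => ?_⟩
  rw [Ring.add_choose_eq n (Commute.all _ _), Nat.sum_antidiagonal_eq_sum_range_succ_mk]
  simp only [← Unitization.inlRingHom_apply, Ring.map_choose]
end

section
/- Given any set X, any binomial ring A, and any map of sets φ : X → A, there is a unique extension of φ to a morphism of binomial rings φ̃ : Int(ℤ^X) → A (i.e., a ring homomorphism commuting with all the operations ζ_n). -/
/-!
The ring `Int(ℤ^X)` is generated by the binomial polynomials `C(X x, n)`: the products
`∏ C(X x, m x)` span `ℚ[X]` over `ℚ` and are unitriangular with respect to evaluation at the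
points of `ℕ^X`, so an integer-valued polynomial is an integral combination of them.
A ring morphism into a binomial ring, which is torsion-free, automatically commutes with the
operations `ζ_n`; hence it is determined by the images of the variables. For existence, `A`
embeds into `ℚ ⊗ A`, where `ℚ[X]` can be evaluated at `φ`; this evaluation sends `C(X x, n)`
to `C(φ x, n) ∈ A`, hence maps all of `Int(ℤ^X)` into `A`.
-/

/-- The ring `Int(ℤ^X)` of integer-valued polynomials in variables from `X`:
the subring of `ℚ[X]` of polynomials taking integer values on every
integer point `a : X → ℤ`. -/
noncomputable def intPoly (X : Type*) : Subring (MvPolynomial X ℚ) where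
  carrier := {q | ∀ a : X → ℤ, ∃ z : ℤ,
    MvPolynomial.eval (fun i => (a i : ℚ)) q = (z : ℚ)}
  zero_mem' := by
    intro a
    exact ⟨0, by simp⟩
  one_mem' := by
    intro a
    exact ⟨1, by simp⟩
  add_mem' := by
    intro p q hp hq a
    obtain ⟨zp, hzp⟩ := hp a
    obtain ⟨zq, hzq⟩ := hq a
    exact ⟨zp + zq, by simp [hzp, hzq]⟩
  neg_mem' := by
    intro p hp a
    obtain ⟨z, hz⟩ := hp a
    exact ⟨-z, by simp [hz]⟩
  mul_mem' := by
    intro p q hp hq a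
    obtain ⟨zp, hzp⟩ := hp a
    obtain ⟨zq, hzq⟩ := hq a
    exact ⟨zp * zq, by simp [hzp, hzq]⟩

/-- The variable `x ∈ X`, as an element of `Int(ℤ^X)`. -/
noncomputable def intPolyX (X : Type*) (x : X) : intPoly X :=
  ⟨MvPolynomial.X x, fun a => ⟨a x, by simp⟩⟩

open Polynomial in
theorem descPochhammer_eval_map {R S : Type*} [CommRing R] [CommRing S] (f : R →+* S) (n : ℕ)
    (r : R) : (descPochhammer S n).eval (f r) = f ((descPochhammer R n).eval r) := by
  rw [← descPochhammer_map f, eval_map_apply]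

theorem Ring.descPochhammer_eval_eq_factorial_smul_choose {A : Type*} [CommRing A]
    [BinomialRing A] (a : A) (n : ℕ) :
    (descPochhammer A n).eval a = n.factorial • Ring.choose a n := by
  rw [← Ring.descPochhammer_eq_factorial_smul_choose, ← Polynomial.aeval_eq_smeval,
    Polynomial.aeval_def, ← Polynomial.eval_map, descPochhammer_map]

theorem RingHom.map_eq_choose_of_factorial_smul_eq {R A : Type*} [CommRing R] [CommRing A]
    [BinomialRing A] (f : R →+* A) {q s : R} {n : ℕ}
    (h : n.factorial • s = (descPochhammer R n).eval q) : f s = Ring.choose (f q) n := by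
  have := BinomialRing.toIsAddTorsionFree (R := A)
  apply nsmul_right_injective n.factorial_ne_zero
  dsimp only
  rw [← map_nsmul, h, ← descPochhammer_eval_map, Ring.descPochhammer_eval_eq_factorial_smul_choose]

open TensorProduct in
theorem Algebra.TensorProduct.includeRight_injective_of_isAddTorsionFree (A : Type*) [CommRing A]
    [IsAddTorsionFree A] :
    Function.Injective (Algebra.TensorProduct.includeRight : A →ₐ[ℤ] ℚ ⊗[ℤ] A) := by
  have : IsLocalizedModule (nonZeroDivisors ℤ) (TensorProduct.mk ℤ ℚ A 1) :=
    (isLocalizedModule_iff_isBaseChange (nonZeroDivisors ℤ) ℚ _).mpr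
      (TensorProduct.isBaseChange ℤ A ℚ)
  exact (IsLocalizedModule.injective_iff_isRegular (nonZeroDivisors ℤ)
    (TensorProduct.mk ℤ ℚ A 1)).mpr fun c => zsmul_right_injective (nonZeroDivisors.coe_ne_zero c)

theorem RingHom.exists_comp_eq_of_forall_mem_range {R A B : Type*} [Ring R] [Ring A] [Ring B]
    {ι : A →+* B} (hι : Function.Injective ι) (g : R →+* B) (hg : ∀ r, g r ∈ ι.range) :
    ∃ f : R →+* A, ι.comp f = g :=
  ⟨(RingEquiv.ofLeftInverse (Function.leftInverse_invFun hι)).symm.toRingHom.comp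
    (g.codRestrict ι.range hg), by
      ext r
      simp [RingEquiv.ofLeftInverse_symm_apply, Function.invFun_eq (hg r)]⟩

theorem Ring.self_mul_choose {R : Type*} [CommRing R] [BinomialRing R] (r : R) (k : ℕ) :
    r * Ring.choose r k = (k + 1) • Ring.choose r (k + 1) + k • Ring.choose r k := by
  have h := Ring.choose_smul_choose r (n := k + 1) (Nat.le_succ k)
  rw [Nat.choose_succ_self_right, Nat.add_sub_cancel_left, Ring.choose_one_right] at h
  rw [h, nsmul_eq_mul]
  ring

namespace MvPolynomial

variable {σ : Type*}

noncomputable def binomialMonomial (m : σ →₀ ℕ) : MvPolynomial σ ℚ :=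
  m.prod fun x k => Ring.choose (X x) k

theorem X_mul_binomialMonomial [DecidableEq σ] (x : σ) (m : σ →₀ ℕ) :
    X x * binomialMonomial m =
      (m x + 1) • binomialMonomial (m + Finsupp.single x 1) + m x • binomialMonomial m := by
  have hchoose_zero : ∀ (y : σ), Ring.choose (X y : MvPolynomial σ ℚ) 0 = 1 :=
    fun y => Ring.choose_zero_right _
  have herase : (m + Finsupp.single x 1).erase x = m.erase x := by
    rw [Finsupp.erase_add, Finsupp.erase_single, add_zero]
  rw [binomialMonomial, binomialMonomial, ← Finsupp.mul_prod_erase' m x _ hchoose_zero,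
    ← Finsupp.mul_prod_erase' (m + Finsupp.single x 1) x _ hchoose_zero, herase,
    Finsupp.add_apply, Finsupp.single_eq_same, ← mul_assoc, Ring.self_mul_choose, add_mul,
    smul_mul_assoc, smul_mul_assoc]

theorem span_range_binomialMonomial :
    Submodule.span ℚ (Set.range (binomialMonomial (σ := σ))) = ⊤ := by
  classical
  set V := Submodule.span ℚ (Set.range (binomialMonomial (σ := σ)))
  have hX : ∀ x, ∀ v ∈ V, X x * v ∈ V := by
    intro x v hv
    refine (Submodule.map_span_le (LinearMap.mulLeft ℚ (X x)) _ V).mpr ?_ ⟨v, hv, rfl⟩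
    rintro _ ⟨m, rfl⟩
    rw [LinearMap.mulLeft_apply, X_mul_binomialMonomial]
    exact add_mem (Submodule.smul_of_tower_mem _ _ (Submodule.subset_span ⟨_, rfl⟩))
      (Submodule.smul_of_tower_mem _ _ (Submodule.subset_span ⟨_, rfl⟩))
  have hmul : ∀ p : MvPolynomial σ ℚ, ∀ v ∈ V, p * v ∈ V := by
    intro p
    induction p using MvPolynomial.induction_on with
    | C a => exact fun v hv => by rw [← smul_eq_C_mul]; exact V.smul_mem a hv
    | add p q hp hq => exact fun v hv => by rw [add_mul]; exact add_mem (hp v hv) (hq v hv)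
    | mul_X p x hp => exact fun v hv => by rw [mul_comm p, mul_assoc]; exact hX x _ (hp v hv)
  refine eq_top_iff.mpr fun p _ => ?_
  simpa [binomialMonomial] using hmul p (binomialMonomial 0) (Submodule.subset_span ⟨0, rfl⟩)

theorem eval_natCast_binomialMonomial (n m : σ →₀ ℕ) :
    eval (fun x => (n x : ℚ)) (binomialMonomial m) =
      ∏ x ∈ m.support, ((n x).choose (m x) : ℚ) := by
  simp only [binomialMonomial, Finsupp.prod, map_prod, Ring.map_choose, eval_X,
    Ring.choose_natCast]

theorem eval_natCast_binomialMonomial_self (n : σ →₀ ℕ) :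
    eval (fun x => (n x : ℚ)) (binomialMonomial n) = 1 := by
  simp [eval_natCast_binomialMonomial]

theorem eval_natCast_binomialMonomial_of_not_le {n m : σ →₀ ℕ} (h : ¬ m ≤ n) :
    eval (fun x => (n x : ℚ)) (binomialMonomial m) = 0 := by
  obtain ⟨x, hx, hlt⟩ : ∃ x ∈ m.support, n x < m x := by
    simpa [Finsupp.le_iff] using h
  rw [eval_natCast_binomialMonomial,
    Finset.prod_eq_zero hx (by rw [Nat.choose_eq_zero_of_lt hlt, Nat.cast_zero])]

/-- The value at `n` is `c n` plus an integral combination of the `c m` with `m < n`. -/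
theorem coeff_mem_range_intCast_of_eval_natCast_mem (c : (σ →₀ ℕ) →₀ ℚ)
    (hc : ∀ n : σ →₀ ℕ, eval (fun x => (n x : ℚ)) (c.sum fun m r => r • binomialMonomial m) ∈
      (Int.castRingHom ℚ).range) (n : σ →₀ ℕ) :
    c n ∈ (Int.castRingHom ℚ).range := by
  classical
  induction n using WellFoundedLT.induction with
  | _ n ih =>
  by_cases hn : n ∈ c.support
  swap
  · rw [Finsupp.notMem_support_iff.mp hn]
    exact zero_mem _
  have hval := hc n
  rw [Finsupp.sum, map_sum, ← Finset.add_sum_erase _ _ hn, smul_eval,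
    eval_natCast_binomialMonomial_self, mul_one] at hval
  have hrest : ∑ m ∈ c.support.erase n,
      eval (fun x => (n x : ℚ)) (c m • binomialMonomial m) ∈ (Int.castRingHom ℚ).range := by
    refine Subring.sum_mem _ fun m hm => ?_
    rw [smul_eval]
    by_cases hmn : m ≤ n
    · rw [eval_natCast_binomialMonomial]
      exact mul_mem (ih m (lt_of_le_of_ne hmn (Finset.ne_of_mem_erase hm)))
        (prod_mem fun x _ => natCast_mem _ _)
    · rw [eval_natCast_binomialMonomial_of_not_le hmn, mul_zero]
      exact zero_mem _
  simpa using sub_mem hval hrest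

end MvPolynomial

open MvPolynomial

theorem mem_closure_choose_X_of_mem_intPoly {σ : Type*} {q : MvPolynomial σ ℚ}
    (hq : q ∈ intPoly σ) :
    q ∈ Subring.closure
      (Set.range fun p : σ × ℕ => Ring.choose (X p.1 : MvPolynomial σ ℚ) p.2) := by
  have hspan : q ∈ Submodule.span ℚ (Set.range (binomialMonomial (σ := σ))) := by
    rw [span_range_binomialMonomial]
    trivial
  obtain ⟨c, rfl⟩ := Finsupp.mem_span_range_iff_exists_finsupp.mp hspan
  have hq' : ∀ a : σ → ℤ, ∃ z : ℤ,
      eval (fun x => (a x : ℚ)) (c.sum fun m r => r • binomialMonomial m) = z := hq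
  have hc := coeff_mem_range_intCast_of_eval_natCast_mem c fun n => by
    obtain ⟨z, hz⟩ := hq' fun x => n x
    exact ⟨z, by simpa using hz.symm⟩
  refine Subring.sum_mem _ fun m _ => ?_
  obtain ⟨z, hz⟩ := hc m
  change c m • binomialMonomial m ∈ _
  rw [← hz, eq_intCast, Int.cast_smul_eq_zsmul]
  refine Subring.zsmul_mem _ ?_ z
  exact Subring.prod_mem _ fun x _ => Subring.subset_closure ⟨(x, m x), rfl⟩

theorem choose_X_mem_intPoly {X : Type*} (x : X) (n : ℕ) :
    Ring.choose (MvPolynomial.X x : MvPolynomial X ℚ) n ∈ intPoly X := by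
  intro a
  refine ⟨Ring.choose (a x) n, ?_⟩
  rw [Ring.map_choose, eval_X]
  exact (Ring.map_choose (Int.castRingHom ℚ) (a x) n).symm

noncomputable def intPolyChoose (X : Type*) (x : X) (n : ℕ) : intPoly X :=
  ⟨Ring.choose (MvPolynomial.X x) n, choose_X_mem_intPoly x n⟩

theorem factorial_smul_intPolyChoose (X : Type*) (x : X) (n : ℕ) :
    n.factorial • intPolyChoose X x n = (descPochhammer (intPoly X) n).eval (intPolyX X x) := by
  apply Subtype.ext
  change n.factorial • Ring.choose (MvPolynomial.X x) n =
    (intPoly X).subtype ((descPochhammer (intPoly X) n).eval (intPolyX X x))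
  rw [← descPochhammer_eval_map, Ring.descPochhammer_eval_eq_factorial_smul_choose]
  rfl

theorem closure_range_intPolyChoose (X : Type*) :
    Subring.closure (Set.range fun p : X × ℕ => intPolyChoose X p.1 p.2) = ⊤ := by
  refine eq_top_iff.mpr fun q _ => ?_
  have hq : (q : MvPolynomial X ℚ) ∈
      (Subring.closure (Set.range fun p : X × ℕ => intPolyChoose X p.1 p.2)).map
        (intPoly X).subtype := by
    rw [RingHom.map_closure, ← Set.range_comp]
    exact mem_closure_choose_X_of_mem_intPoly q.2
  obtain ⟨q', hq', hq'q⟩ := Subring.mem_map.mp hq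
  rwa [← Subtype.ext hq'q]

theorem intPoly.ringHom_ext (X : Type*) {A : Type*} [CommRing A] [BinomialRing A]
    {f g : intPoly X →+* A} (h : ∀ x, f (intPolyX X x) = g (intPolyX X x)) : f = g := by
  refine RingHom.eq_of_eqOn_set_dense (closure_range_intPolyChoose X) ?_
  rintro _ ⟨⟨x, n⟩, rfl⟩
  have hxn := factorial_smul_intPolyChoose X x n
  rw [f.map_eq_choose_of_factorial_smul_eq hxn, g.map_eq_choose_of_factorial_smul_eq hxn, h]

open TensorProduct in
theorem intPoly.exists_ringHom_map_intPolyX (X : Type*) {A : Type*} [CommRing A] [BinomialRing A]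
    (φ : X → A) : ∃ f : intPoly X →+* A, ∀ x, f (intPolyX X x) = φ x := by
  have := BinomialRing.toIsAddTorsionFree (R := A)
  let ι : A →+* ℚ ⊗[ℤ] A := Algebra.TensorProduct.includeRight.toRingHom
  have hι : Function.Injective ι :=
    Algebra.TensorProduct.includeRight_injective_of_isAddTorsionFree A
  let g : MvPolynomial X ℚ →+* ℚ ⊗[ℤ] A := (aeval (ι ∘ φ)).toRingHom
  have hg : ∀ q : intPoly X, g q ∈ ι.range := by
    intro q
    have hq := (Subring.mem_map (f := g)).mpr ⟨_, mem_closure_choose_X_of_mem_intPoly q.2, rfl⟩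
    rw [RingHom.map_closure] at hq
    refine Subring.closure_le.mpr ?_ hq
    rintro _ ⟨_, ⟨⟨x, n⟩, rfl⟩, rfl⟩
    exact ⟨Ring.choose (φ x) n, by simp [g, Ring.map_choose]⟩
  obtain ⟨f, hf⟩ :=
    RingHom.exists_comp_eq_of_forall_mem_range hι (g.comp (intPoly X).subtype) hg
  refine ⟨f, fun x => hι ?_⟩
  simpa [g, intPolyX] using congr($hf (intPolyX X x))

/-- Given any set `X`, any binomial ring `A`, and any map of sets `φ : X → A`,
there is a unique extension of `φ` to a morphism of binomial rings
`φ̃ : Int(ℤ^X) → A`, i.e. a ring homomorphism commuting with all the binomial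
operations `ζ_n` (on `Int(ℤ^X)`, the element `ζ_n(q)` is the unique `s` with
`n! • s = q(q−1)⋯(q−n+1)`; on `A` it is `Ring.choose · n`). -/
theorem stmt_7 (X : Type*) (A : Type*) [CommRing A] [BinomialRing A] (φ : X → A) :
    ∃! f : intPoly X →+* A,
      (∀ x : X, f (intPolyX X x) = φ x) ∧
      (∀ (q s : intPoly X) (n : ℕ),
        n.factorial • s = (descPochhammer (intPoly X) n).eval q →
        f s = Ring.choose (f q) n) := by
  obtain ⟨f, hf⟩ := intPoly.exists_ringHom_map_intPolyX X φ
  refine ⟨f, ⟨hf, fun q s n h => f.map_eq_choose_of_factorial_smul_eq h⟩, fun f' hf' => ?_⟩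
  exact intPoly.ringHom_ext X fun x => by rw [hf'.1, hf]
end

section
/- Let A be a graded R-algebra with cup-one products, equipped with a map ∘ : D²(A) ⊗ D²(A) → D²(A) satisfying (u∪v)∘(w∪z) = (u∪₁w)∪(v∪₁z), and a differential d. If the degree-1 right Hirsch identity a ∪₁ (b∪c) = da ∘ (b∪c) − (b∪c) ∪₁ a holds whenever da ∈ D²(A), and the degree-1 Steenrod identity d(a∪₁b) = −a∪b − b∪a + da∪₁b − a∪₁db holds for all a,b ∈ A¹, then the ∪₁-d formula d(a∪₁b) = −a∪b − b∪a + da∪₁b + db∪₁a − da∘db holds for all a,b ∈ A¹ with da, db ∈ D²(A). -/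
/-- A graded algebra with cup-one products (only the degree-(1,2) data is recorded):
`R`-modules `A¹`, `A²` with an `R`-bilinear cup product `A¹ ⊗ A¹ → A²`, cup-one
products `A¹ ⊗ A¹ → A¹`, `A² ⊗ A¹ → A²`, `A¹ ⊗ A² → A²`, and a differential
`d : A¹ → A²`, such that the left Hirsch identity holds and `∪₁` makes `R ⊕ A¹`
a commutative ring (equivalently, `∪₁` on `A¹` is bilinear, commutative, and
associative). -/
structure CupOneAlgebra (R : Type*) [CommRing R] where
  A1 : Type*
  A2 : Type*
  [acg1 : AddCommGroup A1]
  [acg2 : AddCommGroup A2]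
  [mod1 : Module R A1]
  [mod2 : Module R A2]
  cup : A1 →ₗ[R] A1 →ₗ[R] A2
  cup1 : A1 →ₗ[R] A1 →ₗ[R] A1
  cup21 : A2 →ₗ[R] A1 →ₗ[R] A2
  cup12 : A1 →ₗ[R] A2 →ₗ[R] A2
  d1 : A1 →ₗ[R] A2
  /-- The left Hirsch identity `(a ∪ b) ∪₁ c = a ∪ (b ∪₁ c) + (a ∪₁ c) ∪ b`. -/
  hirsch : ∀ a b c : A1, cup21 (cup a b) c = cup a (cup1 b c) + cup (cup1 a c) b
  cup1_comm : ∀ a b : A1, cup1 a b = cup1 b a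
  cup1_assoc : ∀ a b c : A1, cup1 (cup1 a b) c = cup1 a (cup1 b c)

attribute [instance] CupOneAlgebra.acg1 CupOneAlgebra.acg2
  CupOneAlgebra.mod1 CupOneAlgebra.mod2

/-- `D²(A)`: the `R`-submodule of `A²` spanned by cup products of degree-one
elements (the decomposables). -/
def CupOneAlgebra.D2 {R : Type*} [CommRing R] (C : CupOneAlgebra R) :
    Submodule R C.A2 :=
  Submodule.span R {x : C.A2 | ∃ a b : C.A1, x = C.cup a b}

/-- Let `A` be a graded `R`-algebra with cup-one products, equipped with a map
`∘ : D²(A) ⊗ D²(A) → D²(A)` satisfying `(u∪v) ∘ (w∪z) = (u∪₁w) ∪ (v∪₁z)`, and a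
differential `d`.  If the degree-1 right Hirsch identity
`a ∪₁ (b∪c) = da ∘ (b∪c) − (b∪c) ∪₁ a` holds whenever `da ∈ D²(A)`, and the
degree-1 Steenrod identity `d(a∪₁b) = −a∪b − b∪a + da∪₁b − a∪₁db` holds for all
`a, b ∈ A¹`, then the `∪₁`-`d` formula
`d(a∪₁b) = −a∪b − b∪a + da∪₁b + db∪₁a − da∘db` holds for all `a, b ∈ A¹` with
`da, db ∈ D²(A)`. -/
theorem stmt_9 {R : Type*} [CommRing R] (C : CupOneAlgebra R)
    (circ : C.A2 →ₗ[R] C.A2 →ₗ[R] C.A2)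
    (hcircD2 : ∀ x ∈ C.D2, ∀ y ∈ C.D2, circ x y ∈ C.D2)
    (hcirc : ∀ u v w z : C.A1,
      circ (C.cup u v) (C.cup w z) = C.cup (C.cup1 u w) (C.cup1 v z))
    (hRH : ∀ a : C.A1, C.d1 a ∈ C.D2 → ∀ b c : C.A1,
      C.cup12 a (C.cup b c) = circ (C.d1 a) (C.cup b c) - C.cup21 (C.cup b c) a)
    (hSt : ∀ a b : C.A1, C.d1 (C.cup1 a b)
      = -C.cup a b - C.cup b a + C.cup21 (C.d1 a) b - C.cup12 a (C.d1 b)) :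
    ∀ a b : C.A1, C.d1 a ∈ C.D2 → C.d1 b ∈ C.D2 →
      C.d1 (C.cup1 a b)
        = -C.cup a b - C.cup b a + C.cup21 (C.d1 a) b + C.cup21 (C.d1 b) a
          - circ (C.d1 a) (C.d1 b) := by
  intro a b ha hb
  have key : ∀ y ∈ C.D2,
      C.cup12 a y = circ (C.d1 a) y - C.cup21 y a := by
    intro y hy
    induction hy using Submodule.span_induction with
    | mem x hx =>
      obtain ⟨u, v, rfl⟩ := hx
      exact hRH a ha u v
    | zero => simp
    | add x y _ _ hx hy => simp [hx, hy]; abel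
    | smul r x _ hx => simp [hx, smul_sub]
  rw [hSt a b, key (C.d1 b) hb]
  abel
end

section
/- Let A be the singular (or simplicial) cochain algebra of a Δ-complex over a commutative ring R, with Steenrod's cup-one product. Then there is no fixed ℤ-linear combination of cup products, cup products of cup-one products (of the forms (u_{i}∪₁u_{j})∪u_{k}, u_{i}∪(u_{j}∪₁u_{k}), (u_{i}∪₁u_{j})∪(u_{k}∪₁u_{l}), and u_{i}∪u_{j}) with constant coefficients that equals u₃ ∪₁ (u₁ ∪ u₂) for all 1-cochains u₁, u₂, u₃ on all Δ-complexes. -/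
/-- The 2-truncation of a Δ-complex, which is all that is relevant here: a type of
1-simplices, a type of 2-simplices, and the three face maps of a 2-simplex
`[0,1,2]`: the front face `[0,1]`, the back face `[1,2]`, and the third face
`[0,2]`. -/
structure DeltaTwoComplex where
  E : Type
  S : Type
  front : S → E
  back : S → E
  third : S → E

namespace DeltaTwoComplex

/-- The cup product of 1-cochains: `(u ∪ v)([i,j,k]) = u([i,j]) · v([j,k])`. -/
def cupC (X : DeltaTwoComplex) (u v : X.E → ℤ) : X.S → ℤ :=
  fun s => u (X.front s) * v (X.back s)

/-- Steenrod's cup-one product of 1-cochains: `(u ∪₁ v)(e) = u(e) · v(e)`. -/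
def cup1C (X : DeltaTwoComplex) (u v : X.E → ℤ) : X.E → ℤ :=
  fun e => u e * v e

/-- Steenrod's cup-one product of a 1-cochain and a 2-cochain:
`(u ∪₁ z)(s) = −u(e₃) · z(s)`, where `e₃` is the third face of `s`. -/
def cup1TwoC (X : DeltaTwoComplex) (u : X.E → ℤ) (z : X.S → ℤ) : X.S → ℤ :=
  fun s => -u (X.third s) * z s

end DeltaTwoComplex

open DeltaTwoComplex

/-!
On a 2-simplex `s`, every cup product `a ∪ b` of 1-cochains only sees the values of `a` on the
front face and of `b` on the back face, and `∪₁` of 1-cochains is computed edgewise; so every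
term of the linear combination is blind to the values of the cochains on the third face of `s`.
By contrast `(u₃ ∪₁ (u₁ ∪ u₂))(s)` is linear in the value of `u₃` on the third face. On the
standard 2-simplex, taking all `uᵢ` equal to `1` except for the value `t` on the third face
makes the left side `-t` and the right side independent of `t`.
-/

namespace DeltaTwoComplex

def twoSimplex : DeltaTwoComplex := ⟨Fin 3, Unit, fun _ => 0, fun _ => 1, fun _ => 2⟩

def cupCombination (α₁ α₂ : Fin 3 → Fin 3 → Fin 3 → ℤ) (α₃ : Fin 3 → Fin 3 → Fin 3 → Fin 3 → ℤ)
    (α₄ : Fin 3 → Fin 3 → ℤ) (X : DeltaTwoComplex) (u : Fin 3 → X.E → ℤ) : X.S → ℤ :=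
  (∑ i : Fin 3, ∑ j : Fin 3, ∑ k : Fin 3,
      α₁ i j k • cupC X (cup1C X (u i) (u j)) (u k))
    + (∑ i : Fin 3, ∑ j : Fin 3, ∑ k : Fin 3,
      α₂ i j k • cupC X (u i) (cup1C X (u j) (u k)))
    + (∑ i : Fin 3, ∑ j : Fin 3, ∑ k : Fin 3, ∑ l : Fin 3,
      α₃ i j k l • cupC X (cup1C X (u i) (u j)) (cup1C X (u k) (u l)))
    + (∑ i : Fin 3, ∑ j : Fin 3, α₄ i j • cupC X (u i) (u j))

theorem cupCombination_apply_congr (α₁ α₂ : Fin 3 → Fin 3 → Fin 3 → ℤ)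
    (α₃ : Fin 3 → Fin 3 → Fin 3 → Fin 3 → ℤ) (α₄ : Fin 3 → Fin 3 → ℤ) {X : DeltaTwoComplex}
    {u v : Fin 3 → X.E → ℤ} {s : X.S} (hfront : ∀ i, u i (X.front s) = v i (X.front s))
    (hback : ∀ i, u i (X.back s) = v i (X.back s)) :
    cupCombination α₁ α₂ α₃ α₄ X u s = cupCombination α₁ α₂ α₃ α₄ X v s := by
  simp only [cupCombination, cupC, cup1C, Pi.add_apply, Finset.sum_apply, Pi.smul_apply,
    hfront, hback]

theorem cup1TwoC_cupC_apply (X : DeltaTwoComplex) (w a b : X.E → ℤ) (s : X.S) :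
    cup1TwoC X w (cupC X a b) s = -(w (X.third s) * a (X.front s) * b (X.back s)) := by
  simp only [cup1TwoC, cupC]
  ring

end DeltaTwoComplex

/-- There is no fixed ℤ-linear combination of cup products, cup products of
cup-one products — of the forms `(u_i ∪₁ u_j) ∪ u_k`, `u_i ∪ (u_j ∪₁ u_k)`,
`(u_i ∪₁ u_j) ∪ (u_k ∪₁ u_l)`, and `u_i ∪ u_j` — with constant coefficients that
equals `u₃ ∪₁ (u₁ ∪ u₂)` for all 1-cochains `u₁, u₂, u₃` on all Δ-complexes. -/
theorem stmt_12 :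
    ¬∃ (α₁ : Fin 3 → Fin 3 → Fin 3 → ℤ) (α₂ : Fin 3 → Fin 3 → Fin 3 → ℤ)
        (α₃ : Fin 3 → Fin 3 → Fin 3 → Fin 3 → ℤ) (α₄ : Fin 3 → Fin 3 → ℤ),
      ∀ (X : DeltaTwoComplex) (u : Fin 3 → X.E → ℤ),
        cup1TwoC X (u 2) (cupC X (u 0) (u 1))
          = (∑ i : Fin 3, ∑ j : Fin 3, ∑ k : Fin 3,
                α₁ i j k • cupC X (cup1C X (u i) (u j)) (u k))
            + (∑ i : Fin 3, ∑ j : Fin 3, ∑ k : Fin 3,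
                α₂ i j k • cupC X (u i) (cup1C X (u j) (u k)))
            + (∑ i : Fin 3, ∑ j : Fin 3, ∑ k : Fin 3, ∑ l : Fin 3,
                α₃ i j k l • cupC X (cup1C X (u i) (u j)) (cup1C X (u k) (u l)))
            + (∑ i : Fin 3, ∑ j : Fin 3, α₄ i j • cupC X (u i) (u j)) := by
  rintro ⟨α₁, α₂, α₃, α₄, h⟩
  let u (t : ℤ) : Fin 3 → Fin 3 → ℤ := fun _ => Function.update 1 2 t
  have hcombination (t : ℤ) : -t = cupCombination α₁ α₂ α₃ α₄ twoSimplex (u t) () := by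
    calc -t = cup1TwoC twoSimplex (u t 2) (cupC twoSimplex (u t 0) (u t 1)) () := by
          simp [cup1TwoC_cupC_apply, u, twoSimplex]
      _ = _ := congrFun (h twoSimplex (u t)) ()
  have hblind : cupCombination α₁ α₂ α₃ α₄ twoSimplex (u 1) () =
      cupCombination α₁ α₂ α₃ α₄ twoSimplex (u 2) () :=
    cupCombination_apply_congr α₁ α₂ α₃ α₄ (fun _ => rfl) (fun _ => rfl)
  have : (-1 : ℤ) = -2 := (hcombination 1).trans (hblind.trans (hcombination 2).symm)
  omega
end

section
/- Let A be a ℤ_p-binomial ∪₁-dga for a prime p. For every cocycle a ∈ Z¹(A) and every integer k with 2 ≤ k ≤ p−1, one has d(ζ_k(a)) = −∑_{ℓ=1}^{k−1} ζ_ℓ(a) ∪ ζ_{k−ℓ}(a), where ζ_j(a) = a(a−1)⋯(a−j+1)/j! computed with the ∪₁-multiplication (j! is invertible in ℤ_p for j < p). -/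
/-- A `ℤ_p`-`∪₁`-dga (only the degree-(1,2) data is recorded): `ZMod p`-modules
`A¹`, `A²` with a bilinear cup product `A¹ ⊗ A¹ → A²`, cup-one products
`A¹ ⊗ A¹ → A¹` and `A² ⊗ A¹ → A²`, a `∘`-product on `A²`, and a differential
`d : A¹ → A²`, satisfying the left Hirsch identity, commutativity and
associativity of `∪₁` on `A¹`, `(u∪v) ∘ (w∪z) = (u∪₁w) ∪ (v∪₁z)`, and the
`∪₁`-`d` formula for decomposable differentials. -/
structure ZpCupOneDGA (p : ℕ) where
  A1 : Type*
  A2 : Type*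
  [acg1 : AddCommGroup A1]
  [acg2 : AddCommGroup A2]
  [mod1 : Module (ZMod p) A1]
  [mod2 : Module (ZMod p) A2]
  cup : A1 →ₗ[ZMod p] A1 →ₗ[ZMod p] A2
  cup1 : A1 →ₗ[ZMod p] A1 →ₗ[ZMod p] A1
  cup21 : A2 →ₗ[ZMod p] A1 →ₗ[ZMod p] A2
  circ : A2 →ₗ[ZMod p] A2 →ₗ[ZMod p] A2
  d1 : A1 →ₗ[ZMod p] A2
  hirsch : ∀ a b c : A1, cup21 (cup a b) c = cup a (cup1 b c) + cup (cup1 a c) b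
  cup1_comm : ∀ a b : A1, cup1 a b = cup1 b a
  cup1_assoc : ∀ a b c : A1, cup1 (cup1 a b) c = cup1 a (cup1 b c)
  circ_spec : ∀ u v w z : A1,
    circ (cup u v) (cup w z) = cup (cup1 u w) (cup1 v z)
  cup1d : ∀ a b : A1,
    d1 a ∈ Submodule.span (ZMod p) {x : A2 | ∃ u v : A1, x = cup u v} →
    d1 b ∈ Submodule.span (ZMod p) {x : A2 | ∃ u v : A1, x = cup u v} →
    d1 (cup1 a b)
      = -cup a b - cup b a + cup21 (d1 a) b + cup21 (d1 b) a
        - circ (d1 a) (d1 b)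

attribute [instance] ZpCupOneDGA.acg1 ZpCupOneDGA.acg2
  ZpCupOneDGA.mod1 ZpCupOneDGA.mod2

/-- The falling factorial `a(a−1)⋯(a−n+1)` of a degree-one element `a`, computed
with the `∪₁`-multiplication in the unitization `ZMod p ⊕ A¹`; the value is the
pair (scalar component, `A¹`-component). -/
def fallAux {p : ℕ} (S : ZpCupOneDGA p) (a : S.A1) : ℕ → ZMod p × S.A1
  | 0 => (1, 0)
  | n + 1 =>
    let c := (fallAux S a n).1
    let x := (fallAux S a n).2
    (c * (-(n : ZMod p)), c • a + (-(n : ZMod p)) • x + S.cup1 x a)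

/-- The binomial operation `ζ_k(a) = a(a−1)⋯(a−k+1)/k!` computed with the
`∪₁`-multiplication (`k!` is invertible in `ℤ_p` for `k < p`). -/
noncomputable def zetaP {p : ℕ} (S : ZpCupOneDGA p) (k : ℕ) (a : S.A1) : S.A1 :=
  ((k.factorial : ZMod p))⁻¹ • (fallAux S a k).2

section Aux

variable {p : ℕ} (S : ZpCupOneDGA p) (a : S.A1)

lemma fallAux_fst_eq_zero : ∀ n : ℕ, 1 ≤ n → (fallAux S a n).1 = 0 := by
  intro n
  induction n with
  | zero => omega
  | succ m ih =>
    intro _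
    rcases Nat.lt_or_ge m 1 with hm | hm
    · have : m = 0 := by omega
      subst this
      simp [fallAux]
    · simp [fallAux, ih hm]

lemma fallAux_one : (fallAux S a 1).2 = a := by
  simp [fallAux]

lemma fallAux_succ (n : ℕ) (hn : 1 ≤ n) :
    (fallAux S a (n + 1)).2
      = (-(n : ZMod p)) • (fallAux S a n).2 + S.cup1 (fallAux S a n).2 a := by
  have h := fallAux_fst_eq_zero S a n hn
  simp [fallAux, h]

lemma cup1_fall (m : ℕ) (hm : 1 ≤ m) :
    S.cup1 (fallAux S a m).2 a
      = (fallAux S a (m + 1)).2 + (m : ZMod p) • (fallAux S a m).2 := by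
  rw [fallAux_succ S a m hm]
  simp only [neg_smul]
  abel

lemma key_sum {M : Type*} [AddCommGroup M] [Module (ZMod p) M] (k : ℕ) (hk : 1 ≤ k)
    (g : ℕ → ℕ → M) :
    (k : ZMod p) • (∑ ℓ ∈ Finset.Ico 1 k, ((k.choose ℓ : ℕ) : ZMod p) • g ℓ (k - ℓ))
      - g k 1 - g 1 k
      - ∑ ℓ ∈ Finset.Ico 1 k, ((k.choose ℓ : ℕ) : ZMod p) •
          (g ℓ (k + 1 - ℓ) + g (ℓ + 1) (k - ℓ)
            + ((k - ℓ : ℕ) : ZMod p) • g ℓ (k - ℓ) + (ℓ : ZMod p) • g ℓ (k - ℓ))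
      = -∑ ℓ ∈ Finset.Ico 1 (k + 1), (((k + 1).choose ℓ : ℕ) : ZMod p) • g ℓ (k + 1 - ℓ) := by
  have hcancel : (k : ZMod p) •
      (∑ ℓ ∈ Finset.Ico 1 k, ((k.choose ℓ : ℕ) : ZMod p) • g ℓ (k - ℓ))
      = ∑ ℓ ∈ Finset.Ico 1 k, ((k.choose ℓ : ℕ) : ZMod p) •
          (((k - ℓ : ℕ) : ZMod p) • g ℓ (k - ℓ) + (ℓ : ZMod p) • g ℓ (k - ℓ)) := by
    rw [Finset.smul_sum]
    refine Finset.sum_congr rfl fun ℓ hℓ => ?_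
    obtain ⟨h1, h2⟩ := Finset.mem_Ico.mp hℓ
    rw [smul_smul, smul_add, smul_smul, smul_smul, ← add_smul]
    congr 1
    have hc : ((k - ℓ : ℕ) : ZMod p) = (k : ZMod p) - (ℓ : ZMod p) := by
      push_cast [Nat.cast_sub (le_of_lt h2)]
      ring
    rw [hc]; ring
  have hsplit : ∑ ℓ ∈ Finset.Ico 1 (k + 1), (((k + 1).choose ℓ : ℕ) : ZMod p) • g ℓ (k + 1 - ℓ)
      = (∑ ℓ ∈ Finset.Ico 1 k, ((k.choose ℓ : ℕ) : ZMod p) • g ℓ (k + 1 - ℓ) + g k 1)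
        + (g 1 k + ∑ ℓ ∈ Finset.Ico 1 k, ((k.choose ℓ : ℕ) : ZMod p) • g (ℓ + 1) (k - ℓ)) := by
    have pascal : ∀ ℓ ∈ Finset.Ico 1 (k + 1),
        (((k + 1).choose ℓ : ℕ) : ZMod p) • g ℓ (k + 1 - ℓ)
          = ((k.choose ℓ : ℕ) : ZMod p) • g ℓ (k + 1 - ℓ)
            + ((k.choose (ℓ - 1) : ℕ) : ZMod p) • g ℓ (k + 1 - ℓ) := by
      intro ℓ hℓ
      obtain ⟨h1, _⟩ := Finset.mem_Ico.mp hℓ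
      have hℓ' : ℓ = (ℓ - 1) + 1 := by omega
      rw [← add_smul]
      congr 1
      rw [hℓ', Nat.choose_succ_succ]
      push_cast [Nat.succ_eq_add_one]
      ring
    rw [Finset.sum_congr rfl pascal, Finset.sum_add_distrib]
    have hA : ∑ ℓ ∈ Finset.Ico 1 (k + 1), ((k.choose ℓ : ℕ) : ZMod p) • g ℓ (k + 1 - ℓ)
        = ∑ ℓ ∈ Finset.Ico 1 k, ((k.choose ℓ : ℕ) : ZMod p) • g ℓ (k + 1 - ℓ) + g k 1 := by
      rw [Finset.sum_Ico_succ_top hk]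
      congr 1
      simp [Nat.choose_self]
    have hB : ∑ ℓ ∈ Finset.Ico 1 (k + 1), ((k.choose (ℓ - 1) : ℕ) : ZMod p) • g ℓ (k + 1 - ℓ)
        = g 1 k + ∑ ℓ ∈ Finset.Ico 1 k, ((k.choose ℓ : ℕ) : ZMod p) • g (ℓ + 1) (k - ℓ) := by
      rw [Finset.sum_Ico_eq_sum_range]
      have : ∀ i ∈ Finset.range (k + 1 - 1),
          ((k.choose (1 + i - 1) : ℕ) : ZMod p) • g (1 + i) (k + 1 - (1 + i))
            = ((k.choose i : ℕ) : ZMod p) • g (i + 1) (k - i) := by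
        intro i _
        rw [show 1 + i - 1 = i from by omega, show k + 1 - (1 + i) = k - i from by omega,
          show 1 + i = i + 1 from by omega]
      rw [Finset.sum_congr rfl this, show k + 1 - 1 = k from by omega,
        Finset.range_eq_Ico, Finset.sum_eq_sum_Ico_succ_bot (by omega : 0 < k)]
      simp
    rw [hA, hB]
  rw [hcancel, hsplit]
  simp only [smul_add, Finset.sum_add_distrib]
  abel

lemma d_fall (ha : S.d1 a = 0) : ∀ k : ℕ, 1 ≤ k →
    S.d1 (fallAux S a k).2
      = -∑ ℓ ∈ Finset.Ico 1 k, ((k.choose ℓ : ℕ) : ZMod p) •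
          S.cup (fallAux S a ℓ).2 (fallAux S a (k - ℓ)).2 := by
  intro k
  induction k with
  | zero => omega
  | succ m ih =>
    intro _
    rcases Nat.lt_or_ge m 1 with hm | hm
    · have : m = 0 := by omega
      subst this
      simp [fallAux_one, ha]
    · have IH := ih hm
      have hmem : S.d1 (fallAux S a m).2 ∈
          Submodule.span (ZMod p) {x : S.A2 | ∃ u v : S.A1, x = S.cup u v} := by
        rw [IH]
        exact neg_mem (Submodule.sum_mem _ fun ℓ _ =>
          Submodule.smul_mem _ _ (Submodule.subset_span ⟨_, _, rfl⟩))
      have hmema : S.d1 a ∈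
          Submodule.span (ZMod p) {x : S.A2 | ∃ u v : S.A1, x = S.cup u v} := by
        rw [ha]; exact zero_mem _
      have hterm : ∀ ℓ ∈ Finset.Ico 1 m,
          ((m.choose ℓ : ℕ) : ZMod p) •
              S.cup21 (S.cup (fallAux S a ℓ).2 (fallAux S a (m - ℓ)).2) a
            = ((m.choose ℓ : ℕ) : ZMod p) •
              (S.cup (fallAux S a ℓ).2 (fallAux S a (m + 1 - ℓ)).2
                + S.cup (fallAux S a (ℓ + 1)).2 (fallAux S a (m - ℓ)).2
                + ((m - ℓ : ℕ) : ZMod p) •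
                    S.cup (fallAux S a ℓ).2 (fallAux S a (m - ℓ)).2
                + (ℓ : ZMod p) •
                    S.cup (fallAux S a ℓ).2 (fallAux S a (m - ℓ)).2) := by
        intro ℓ hℓ
        obtain ⟨h1, h2⟩ := Finset.mem_Ico.mp hℓ
        congr 1
        rw [S.hirsch, cup1_fall S a ℓ h1, cup1_fall S a (m - ℓ) (by omega),
          show m - ℓ + 1 = m + 1 - ℓ from by omega]
        simp only [map_add, map_smul, LinearMap.add_apply, LinearMap.smul_apply]
        abel
      have step : S.d1 (fallAux S a (m + 1)).2
          = (m : ZMod p) • (∑ ℓ ∈ Finset.Ico 1 m, ((m.choose ℓ : ℕ) : ZMod p) •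
                S.cup (fallAux S a ℓ).2 (fallAux S a (m - ℓ)).2)
            - S.cup (fallAux S a m).2 (fallAux S a 1).2
            - S.cup (fallAux S a 1).2 (fallAux S a m).2
            - ∑ ℓ ∈ Finset.Ico 1 m, ((m.choose ℓ : ℕ) : ZMod p) •
                (S.cup (fallAux S a ℓ).2 (fallAux S a (m + 1 - ℓ)).2
                  + S.cup (fallAux S a (ℓ + 1)).2 (fallAux S a (m - ℓ)).2
                  + ((m - ℓ : ℕ) : ZMod p) •
                      S.cup (fallAux S a ℓ).2 (fallAux S a (m - ℓ)).2
                  + (ℓ : ZMod p) •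
                      S.cup (fallAux S a ℓ).2 (fallAux S a (m - ℓ)).2) := by
        rw [fallAux_succ S a m hm, map_add, map_smul,
          S.cup1d _ _ hmem hmema, ha]
        rw [← Finset.sum_congr rfl hterm]
        rw [IH]
        simp only [map_zero, LinearMap.zero_apply, map_neg, map_sum, map_smul,
          LinearMap.neg_apply, LinearMap.sum_apply, LinearMap.smul_apply,
          fallAux_one, smul_neg, neg_smul]
        abel
      rw [step, key_sum m hm (fun i j => S.cup (fallAux S a i).2 (fallAux S a j).2)]

end Aux

/-- Let `A` be a `ℤ_p`-binomial `∪₁`-dga for a prime `p` (so each `a ∈ A¹`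
satisfies `a(a−1)⋯(a−n+1) = 0` for `n ≥ p`).  For every cocycle `a ∈ Z¹(A)` and
every integer `2 ≤ k ≤ p−1`, one has
`d(ζ_k(a)) = −∑_{ℓ=1}^{k−1} ζ_ℓ(a) ∪ ζ_{k−ℓ}(a)`. -/
theorem stmt_18 (p : ℕ) [Fact p.Prime] (S : ZpCupOneDGA p)
    (hbin : ∀ (a : S.A1) (n : ℕ), p ≤ n → fallAux S a n = (0, 0))
    (a : S.A1) (ha : S.d1 a = 0) (k : ℕ) (h2 : 2 ≤ k) (hk : k ≤ p - 1) :
    S.d1 (zetaP S k a)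
      = -∑ ℓ ∈ Finset.Ico 1 k, S.cup (zetaP S ℓ a) (zetaP S (k - ℓ) a) := by
  have hp : p.Prime := Fact.out
  haveI : NeZero p := ⟨by have := hp.two_le; omega⟩
  have hkp : k < p := by have := hp.two_le; omega
  have hfac : ∀ n : ℕ, n < p → ((n.factorial : ℕ) : ZMod p) ≠ 0 := by
    intro n hn h
    rw [ZMod.natCast_eq_zero_iff] at h
    exact absurd ((Nat.Prime.dvd_factorial hp).mp h) (by omega)
  simp only [zetaP]
  rw [map_smul, d_fall S a ha k (by omega), smul_neg, neg_inj, Finset.smul_sum]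
  refine Finset.sum_congr rfl fun ℓ hℓ => ?_
  obtain ⟨h1, h2⟩ := Finset.mem_Ico.mp hℓ
  simp only [map_smul, LinearMap.smul_apply, smul_smul]
  congr 1
  have hnat : ((k.choose ℓ * ℓ.factorial * (k - ℓ).factorial : ℕ) : ZMod p)
      = ((k.factorial : ℕ) : ZMod p) := by
    rw [Nat.choose_mul_factorial_mul_factorial (le_of_lt h2)]
  push_cast at hnat
  have hf1 := hfac ℓ (by omega)
  have hf2 := hfac (k - ℓ) (by omega)
  have hf3 := hfac k hkp
  push_cast at hf1 hf2 hf3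
  field_simp
  linear_combination hnat
end
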